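/- Let L₁,...,Lₘ be symmetric positive semidefinite n×n matrices with common eigenvector 𝟏 of eigenvalue 0 and λ₁(Lₖ) > 0, and suppose that for every t in the probability simplex T the second smallest eigenvalue of L_t = Σ tₖLₖ/λ₁(Lₖ) is simple. Let t* minimize over T the second largest eigenvalue μ₁(H_t^τ) of H_t^τ = exp(−τL_t) for some fixed τ > 0. Then t* maximizes λ₁(L_t) over T, and the unit eigenvector φ₁(H_{t*}^τ) associated with μ₁(H_{t*}^τ) satisfies φ₁(H_{t*}^τ) = argmin_{x∈X} max_k xᵀLₖx/λ₁(Lₖ) (up to sign). -/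

import Mathlib

open Matrix Finset

noncomputable section

/-- The all-ones vector. -/
def onesVec (n : ℕ) : Fin n → ℝ := fun _ => 1

/-- Quadratic form of a matrix. -/
def quadForm {n : ℕ} (L : Matrix (Fin n) (Fin n) ℝ) (x : Fin n → ℝ) : ℝ :=
  x ⬝ᵥ (L *ᵥ x)

/-- Mean-zero unit vectors. -/
def meanZeroUnit (n : ℕ) : Set (Fin n → ℝ) :=
  {x | onesVec n ⬝ᵥ x = 0 ∧ x ⬝ᵥ x = 1}

/-- The second smallest eigenvalue: the infimum of the Rayleigh quotient over
mean-zero unit vectors (for a PSD matrix with kernel spanned by `onesVec`). -/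
def lam1 {n : ℕ} (L : Matrix (Fin n) (Fin n) ℝ) : ℝ :=
  sInf (quadForm L '' meanZeroUnit n)

/-- The probability simplex. -/
def simplex (m : ℕ) : Set (Fin m → ℝ) := {t | (∀ k, 0 ≤ t k) ∧ ∑ k, t k = 1}

/-- The normalized combination `L_t = ∑ t_k L_k / λ₁(L_k)`. -/
def Lt {n m : ℕ} (L : Fin m → Matrix (Fin n) (Fin n) ℝ) (t : Fin m → ℝ) :
    Matrix (Fin n) (Fin n) ℝ := ∑ k, (t k / lam1 (L k)) • L k

/-- The kernel of `L` is spanned by the all-ones vector. -/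
def kernelOnes {n : ℕ} (L : Matrix (Fin n) (Fin n) ℝ) : Prop :=
  ∀ x : Fin n → ℝ, L *ᵥ x = 0 ↔ ∃ c : ℝ, x = fun _ => c

/-- The second smallest eigenvalue of `M` is simple. -/
def simpleLam1 {n : ℕ} (M : Matrix (Fin n) (Fin n) ℝ) : Prop :=
  ∀ x ∈ meanZeroUnit n, ∀ y ∈ meanZeroUnit n,
    M *ᵥ x = lam1 M • x → M *ᵥ y = lam1 M • y → y = x ∨ y = -x

/-- The worst-case normalized smoothness score over the `m` graphs. -/
def maxScore {n m : ℕ} [Nonempty (Fin m)] (L : Fin m → Matrix (Fin n) (Fin n) ℝ)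
    (x : Fin n → ℝ) : ℝ :=
  Finset.univ.sup' Finset.univ_nonempty (fun k => quadForm (L k) x / lam1 (L k))

end
/-- The second largest eigenvalue of a symmetric matrix with top eigenvector
`𝟏`: the supremum of the Rayleigh quotient over mean-zero unit vectors. -/
noncomputable def mu1 {n : ℕ} (H : Matrix (Fin n) (Fin n) ℝ) : ℝ :=
  sSup (quadForm H '' meanZeroUnit n)

section helpers
open Matrix

variable {n : ℕ}

lemma vecMul_eq_mulVec_transpose (U : Matrix (Fin n) (Fin n) ℝ) (x : Fin n → ℝ) :
    x ᵥ* U = Uᵀ *ᵥ x := by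
  ext i; simp [Matrix.vecMul, Matrix.mulVec, dotProduct, Matrix.transpose_apply, mul_comm]

lemma conjT_eq_transpose (U : Matrix (Fin n) (Fin n) ℝ) : Uᴴ = Uᵀ := by
  ext i j; simp [Matrix.conjTranspose_apply]

-- facts about A = U * diagonal d * Uᴴ for unitary U
lemma conj_diag_quadForm (U : Matrix (Fin n) (Fin n) ℝ) (hU : U * Uᴴ = 1)
    (hU' : Uᴴ * U = 1) (d : Fin n → ℝ) (x : Fin n → ℝ) :
    quadForm (U * Matrix.diagonal d * Uᴴ) x = ∑ i, d i * (Uᴴ *ᵥ x) i ^ 2 := by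
  set y := Uᴴ *ᵥ x with hy
  have h1 : (U * Matrix.diagonal d * Uᴴ) *ᵥ x = U *ᵥ (Matrix.diagonal d *ᵥ y) := by
    rw [← Matrix.mulVec_mulVec, ← Matrix.mulVec_mulVec]
  rw [quadForm, h1, Matrix.dotProduct_mulVec, vecMul_eq_mulVec_transpose, ← conjT_eq_transpose,
    ← hy]
  simp only [dotProduct, Matrix.mulVec_diagonal, sq]
  exact Finset.sum_congr rfl fun i _ => by ring

lemma conj_norm_eq (U : Matrix (Fin n) (Fin n) ℝ) (hU : U * Uᴴ = 1) (x : Fin n → ℝ) :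
    (Uᴴ *ᵥ x) ⬝ᵥ (Uᴴ *ᵥ x) = x ⬝ᵥ x := by
  rw [Matrix.dotProduct_mulVec, vecMul_eq_mulVec_transpose, ← conjT_eq_transpose,
    Matrix.conjTranspose_conjTranspose, Matrix.mulVec_mulVec, hU, Matrix.one_mulVec]

lemma mulVec_U_inj (U : Matrix (Fin n) (Fin n) ℝ) (hU' : Uᴴ * U = 1) {a b : Fin n → ℝ}
    (h : U *ᵥ a = U *ᵥ b) : a = b := by
  have h2 : (Uᴴ * U) *ᵥ a = (Uᴴ * U) *ᵥ b := by
    rw [← Matrix.mulVec_mulVec, ← Matrix.mulVec_mulVec, h]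
  rw [hU'] at h2
  simpa [Matrix.one_mulVec] using h2

lemma conj_diag_eigen_iff (U : Matrix (Fin n) (Fin n) ℝ) (hU : U * Uᴴ = 1)
    (hU' : Uᴴ * U = 1) (d : Fin n → ℝ) (x : Fin n → ℝ) (c : ℝ) :
    (U * Matrix.diagonal d * Uᴴ) *ᵥ x = c • x ↔
      ∀ i, d i * (Uᴴ *ᵥ x) i = c * (Uᴴ *ᵥ x) i := by
  set y := Uᴴ *ᵥ x with hy
  have hx : x = U *ᵥ y := by
    rw [hy, Matrix.mulVec_mulVec, hU, Matrix.one_mulVec]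
  have h1 : (U * Matrix.diagonal d * Uᴴ) *ᵥ x = U *ᵥ (Matrix.diagonal d *ᵥ y) := by
    rw [← Matrix.mulVec_mulVec, ← Matrix.mulVec_mulVec]
  constructor
  · intro h i
    have h2 : U *ᵥ (Matrix.diagonal d *ᵥ y) = U *ᵥ (c • y) := by
      rw [← h1, h, hx, Matrix.mulVec_smul]
    have h3 := mulVec_U_inj U hU' h2
    have := congrFun h3 i
    simpa [Matrix.mulVec_diagonal] using this
  · intro h
    have h4 : Matrix.diagonal d *ᵥ y = c • y := by
      ext i
      simp only [Matrix.mulVec_diagonal, Pi.smul_apply, smul_eq_mul]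
      exact h i
    rw [h1, h4, hx, Matrix.mulVec_smul]

-- A matrix with eigenvector columns of U equals U * diagonal d * Uᴴ
lemma eq_conj_diag_of_eigen (U : Matrix (Fin n) (Fin n) ℝ) (hU : U * Uᴴ = 1)
    (A : Matrix (Fin n) (Fin n) ℝ) (d : Fin n → ℝ)
    (h : ∀ i, A *ᵥ (fun j => U j i) = d i • (fun j => U j i)) :
    A = U * Matrix.diagonal d * Uᴴ := by
  have h1 : A * U = U * Matrix.diagonal d := by
    ext j i
    have := congrFun (h i) j
    simp only [Matrix.mulVec, dotProduct, Pi.smul_apply, smul_eq_mul] at this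
    simp only [Matrix.mul_apply, Matrix.diagonal_apply, mul_ite, mul_zero,
      Finset.sum_ite_eq', Finset.mem_univ, if_true]
    rw [this, mul_comm]
  calc A = A * U * Uᴴ := by rw [Matrix.mul_assoc, hU, Matrix.mul_one]
  _ = U * Matrix.diagonal d * Uᴴ := by rw [h1]

-- exp eigenvector lemma
lemma exp_mulVec_eigen {n : ℕ} (A : Matrix (Fin n) (Fin n) ℝ) (w : Fin n → ℝ) (μ : ℝ)
    (h : A *ᵥ w = μ • w) :
    NormedSpace.exp A *ᵥ w = Real.exp μ • w := by
  letI : SeminormedRing (Matrix (Fin n) (Fin n) ℝ) := Matrix.linftyOpSemiNormedRing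
  letI : NormedRing (Matrix (Fin n) (Fin n) ℝ) := Matrix.linftyOpNormedRing
  letI : NormedAlgebra ℝ (Matrix (Fin n) (Fin n) ℝ) := Matrix.linftyOpNormedAlgebra
  let f : Matrix (Fin n) (Fin n) ℝ →ₗ[ℝ] (Fin n → ℝ) :=
    { toFun := fun B => B *ᵥ w
      map_add' := fun B C => Matrix.add_mulVec B C w
      map_smul' := fun c B => Matrix.smul_mulVec c B w }
  let F : Matrix (Fin n) (Fin n) ℝ →L[ℝ] (Fin n → ℝ) :=
    { toLinearMap := f, cont := f.continuous_of_finiteDimensional }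
  have hpow : ∀ k : ℕ, (A ^ k) *ᵥ w = (μ ^ k) • w := by
    intro k
    induction k with
    | zero => simp
    | succ k ih =>
      rw [pow_succ, ← Matrix.mulVec_mulVec, h, Matrix.mulVec_smul, ih, smul_smul, ← pow_succ']
  have hsum := NormedSpace.expSeries_summable' (𝕂 := ℝ) A
  have h1 : NormedSpace.exp A *ᵥ w = F (NormedSpace.exp A) := rfl
  rw [h1, NormedSpace.exp_eq_tsum ℝ, F.map_tsum hsum]
  have h2 : ∀ k : ℕ, F ((k.factorial⁻¹ : ℝ) • A ^ k) = ((k.factorial⁻¹ : ℝ) * μ ^ k) • w := by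
    intro k
    show ((k.factorial⁻¹ : ℝ) • A ^ k) *ᵥ w = _
    rw [Matrix.smul_mulVec, hpow, smul_smul]
  simp_rw [h2]
  rw [Summable.tsum_smul_const ?_]
  · congr 1
    have := NormedSpace.exp_eq_tsum (𝕂 := ℝ) (𝔸 := ℝ)
    rw [Real.exp_eq_exp_ℝ, this]
    simp [smul_eq_mul]
  · have := NormedSpace.expSeries_summable' (𝕂 := ℝ) μ
    simpa [smul_eq_mul] using this

lemma meanZero_two_le {x : Fin n → ℝ} (hx : x ∈ meanZeroUnit n) : 2 ≤ n := by
  obtain ⟨h1, h2⟩ := hx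
  by_contra h
  push_neg at h
  interval_cases n
  · simp [dotProduct] at h2
  · have hx0 : x 0 = 0 := by
      simpa [onesVec, dotProduct, Fin.sum_univ_one] using h1
    rw [show x = fun _ => x 0 from funext fun i => by rw [Subsingleton.elim i 0]] at h2
    simp [dotProduct, Fin.sum_univ_one, hx0] at h2

lemma spectral_package (hn : 2 ≤ n) {M : Matrix (Fin n) (Fin n) ℝ}
    (hPSD : M.PosSemidef) (hk : kernelOnes M) (τ : ℝ) (hτ : 0 < τ) :
    0 < lam1 M ∧
    (∃ v ∈ meanZeroUnit n, M *ᵥ v = lam1 M • v) ∧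
    (∀ x ∈ meanZeroUnit n, lam1 M ≤ quadForm M x) ∧
    mu1 (NormedSpace.exp (-(τ • M))) = Real.exp (-(τ * lam1 M)) ∧
    (∀ x ∈ meanZeroUnit n,
      NormedSpace.exp (-(τ • M)) *ᵥ x = Real.exp (-(τ * lam1 M)) • x →
        M *ᵥ x = lam1 M • x) ∧
    (∀ x ∈ meanZeroUnit n, quadForm M x = lam1 M → M *ᵥ x = lam1 M • x) := by
  classical
  have hH : M.IsHermitian := hPSD.isHermitian
  set U : Matrix (Fin n) (Fin n) ℝ := (hH.eigenvectorUnitary : Matrix (Fin n) (Fin n) ℝ)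
    with hUdef
  set lam : Fin n → ℝ := hH.eigenvalues with hlamdef
  have hU : U * Uᴴ = 1 := by
    have := hH.eigenvectorUnitary.2
    rw [Unitary.mem_iff] at this
    simpa [Matrix.star_eq_conjTranspose] using this.2
  have hU' : Uᴴ * U = 1 := by
    have := hH.eigenvectorUnitary.2
    rw [Unitary.mem_iff] at this
    simpa [Matrix.star_eq_conjTranspose] using this.1
  have heig : ∀ i, M *ᵥ (fun j => U j i) = lam i • (fun j => U j i) := by
    intro i
    have : (fun j => U j i) = ⇑(hH.eigenvectorBasis i) := rfl
    rw [this]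
    exact hH.mulVec_eigenvectorBasis i
  have hMdecomp : M = U * Matrix.diagonal lam * Uᴴ := eq_conj_diag_of_eigen U hU M lam heig
  set H := NormedSpace.exp (-(τ • M)) with hHdef
  have heigH : ∀ i, H *ᵥ (fun j => U j i) =
      Real.exp (-(τ * lam i)) • (fun j => U j i) := by
    intro i
    apply exp_mulVec_eigen
    rw [Matrix.neg_mulVec, Matrix.smul_mulVec, heig i]
    ext j
    simp
    ring
  have hHdecomp : H = U * Matrix.diagonal (fun i => Real.exp (-(τ * lam i))) * Uᴴ :=
    eq_conj_diag_of_eigen U hU H _ heigH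
  -- coordinates
  have hcoord : ∀ (x : Fin n → ℝ) (i : Fin n), (Uᴴ *ᵥ x) i = (fun j => U j i) ⬝ᵥ x := by
    intro x i
    simp [Matrix.mulVec, dotProduct, Matrix.conjTranspose_apply]
  have hsingle : ∀ i, Uᴴ *ᵥ (fun j => U j i) = Pi.single i 1 := by
    intro i
    have := hH.star_eigenvectorUnitary_mulVec i
    rw [Matrix.star_eq_conjTranspose] at this
    exact this
  have hcolunit : ∀ i, (fun j => U j i) ⬝ᵥ (fun j => U j i) = 1 := by
    intro i
    have h1 := conj_norm_eq U hU (fun j => U j i)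
    rw [hsingle i] at h1
    rw [← h1]
    simp [dotProduct, Pi.single_apply]
  -- the kernel index
  have hones : M *ᵥ onesVec n = 0 := (hk (onesVec n)).mpr ⟨1, rfl⟩
  obtain ⟨i₀, hi₀⟩ : ∃ i₀, (Uᴴ *ᵥ onesVec n) i₀ ≠ 0 := by
    by_contra hcon
    push_neg at hcon
    have hz : Uᴴ *ᵥ onesVec n = 0 := funext hcon
    have h2 : onesVec n = 0 := by
      have hx : onesVec n = U *ᵥ (Uᴴ *ᵥ onesVec n) := by
        rw [Matrix.mulVec_mulVec, hU, Matrix.one_mulVec]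
      rw [hx, hz, Matrix.mulVec_zero]
    have := congrFun h2 ⟨0, by omega⟩
    simp [onesVec] at this
  have hw := (conj_diag_eigen_iff U hU hU' lam (onesVec n) 0).mp
    (by rw [← hMdecomp, hones]; simp)
  have hlam0 : lam i₀ = 0 := by
    have h1 := hw i₀
    rw [zero_mul] at h1
    rcases mul_eq_zero.mp h1 with h | h
    · exact h
    · exact absurd h hi₀
  obtain ⟨c₀, hc₀⟩ : ∃ c, (fun j => U j i₀) = fun _ => c := by
    apply (hk _).mp
    rw [heig i₀, hlam0, zero_smul]
  have hc₀ne : c₀ ≠ 0 := by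
    intro h
    have := hcolunit i₀
    rw [hc₀, h] at this
    simp [dotProduct] at this
  have hdotones : ∀ x : Fin n → ℝ, (fun j => U j i₀) ⬝ᵥ x = c₀ * (onesVec n ⬝ᵥ x) := by
    intro x
    rw [hc₀]
    simp [dotProduct, onesVec, Finset.mul_sum]
  have hy0 : ∀ x ∈ meanZeroUnit n, (Uᴴ *ᵥ x) i₀ = 0 := by
    intro x hx
    rw [hcoord, hdotones, hx.1, mul_zero]
  have horth : ∀ i, i ≠ i₀ → (fun j => U j i₀) ⬝ᵥ (fun j => U j i) = 0 := by
    intro i hi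
    rw [← hcoord, hsingle i]
    simp [Pi.single_apply, (Ne.symm hi)]
  have hlampos : ∀ i, i ≠ i₀ → 0 < lam i := by
    intro i hi
    rcases (hPSD.eigenvalues_nonneg i).lt_or_eq with h | h
    · exact h
    · exfalso
      obtain ⟨c, hc⟩ := (hk _).mp (by rw [heig i, show lam i = (0:ℝ) from h.symm, zero_smul])
      have h2 := horth i hi
      rw [hc₀, hc] at h2
      simp [dotProduct, Finset.sum_const] at h2
      rcases h2 with h2 | h2 | h2
      · omega
      · exact hc₀ne h2
      · -- c = 0, contradiction with unit norm
        have := hcolunit i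
        rw [hc, h2] at this
        simp [dotProduct] at this
  have hcolX : ∀ i, i ≠ i₀ → (fun j => U j i) ∈ meanZeroUnit n := by
    intro i hi
    constructor
    · have h2 := horth i hi
      rw [hdotones] at h2
      rcases mul_eq_zero.mp h2 with h | h
      · exact absurd h hc₀ne
      · exact h
    · exact hcolunit i
  -- minimal nonzero eigenvalue
  obtain ⟨imin, himinne, himin⟩ :
      ∃ i ∈ Finset.univ.erase i₀, ∀ j ∈ Finset.univ.erase i₀, lam i ≤ lam j := by
    apply Finset.exists_min_image
    obtain ⟨j, hj⟩ := Fintype.exists_ne_of_one_lt_card (by simpa using by omega : 1 < Fintype.card (Fin n)) i₀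
    exact ⟨j, Finset.mem_erase.mpr ⟨hj, Finset.mem_univ _⟩⟩
  have himin_ne : imin ≠ i₀ := (Finset.mem_erase.mp himinne).1
  have himinpos : 0 < lam imin := hlampos imin himin_ne
  have himinle : ∀ i, i ≠ i₀ → lam imin ≤ lam i := fun i hi =>
    himin i (Finset.mem_erase.mpr ⟨hi, Finset.mem_univ _⟩)
  have himinX : (fun j => U j imin) ∈ meanZeroUnit n := hcolX imin himin_ne
  -- norm fact
  have hnorm : ∀ x ∈ meanZeroUnit n, ∑ i, (Uᴴ *ᵥ x) i ^ 2 = 1 := by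
    intro x hx
    have h1 := conj_norm_eq U hU x
    rw [hx.2] at h1
    rw [← h1]
    simp [dotProduct, sq]
  -- quadratic forms at columns
  have hquadcol : ∀ i, quadForm M (fun j => U j i) = lam i := by
    intro i
    rw [quadForm, heig i, dotProduct_smul, hcolunit i, smul_eq_mul, mul_one]
  have hquadcolH : ∀ i, quadForm H (fun j => U j i) = Real.exp (-(τ * lam i)) := by
    intro i
    rw [quadForm, heigH i, dotProduct_smul, hcolunit i, smul_eq_mul, mul_one]
  -- lower bound for M
  have hlow : ∀ x ∈ meanZeroUnit n, lam imin ≤ quadForm M x := by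
    intro x hx
    have hq : quadForm M x = ∑ i, lam i * (Uᴴ *ᵥ x) i ^ 2 := by
      conv_lhs => rw [hMdecomp]
      exact conj_diag_quadForm U hU hU' lam x
    rw [hq]
    calc lam imin = ∑ i, lam imin * (Uᴴ *ᵥ x) i ^ 2 := by
          rw [← Finset.mul_sum, hnorm x hx, mul_one]
    _ ≤ ∑ i, lam i * (Uᴴ *ᵥ x) i ^ 2 := by
        apply Finset.sum_le_sum
        intro i _
        by_cases hi : i = i₀
        · subst hi
          rw [hy0 x hx]
          simp
        · exact mul_le_mul_of_nonneg_right (himinle i hi) (sq_nonneg _)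
  have hlam1 : lam1 M = lam imin := by
    apply le_antisymm
    · apply csInf_le
      · exact ⟨lam imin, fun r hr => by obtain ⟨x, hx, rfl⟩ := hr; exact hlow x hx⟩
      · exact ⟨_, himinX, hquadcol imin⟩
    · apply le_csInf
      · exact ⟨_, ⟨_, himinX, hquadcol imin⟩⟩
      · rintro r ⟨x, hx, rfl⟩
        exact hlow x hx
  -- upper bound for H
  have hupH : ∀ x ∈ meanZeroUnit n, quadForm H x ≤ Real.exp (-(τ * lam imin)) := by
    intro x hx
    have hq : quadForm H x = ∑ i, Real.exp (-(τ * lam i)) * (Uᴴ *ᵥ x) i ^ 2 := by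
      conv_lhs => rw [hHdecomp]
      exact conj_diag_quadForm U hU hU' _ x
    rw [hq]
    calc ∑ i, Real.exp (-(τ * lam i)) * (Uᴴ *ᵥ x) i ^ 2
        ≤ ∑ i, Real.exp (-(τ * lam imin)) * (Uᴴ *ᵥ x) i ^ 2 := by
          apply Finset.sum_le_sum
          intro i _
          by_cases hi : i = i₀
          · subst hi
            rw [hy0 x hx]
            simp
          · refine mul_le_mul_of_nonneg_right ?_ (sq_nonneg _)
            apply Real.exp_le_exp.mpr
            have := himinle i hi
            nlinarith
    _ = Real.exp (-(τ * lam imin)) := by rw [← Finset.mul_sum, hnorm x hx, mul_one]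
  have hmu1 : mu1 H = Real.exp (-(τ * lam imin)) := by
    apply le_antisymm
    · apply csSup_le
      · exact ⟨_, ⟨_, himinX, hquadcolH imin⟩⟩
      · rintro r ⟨x, hx, rfl⟩
        exact hupH x hx
    · apply le_csSup
      · exact ⟨Real.exp (-(τ * lam imin)), fun r hr => by
          obtain ⟨x, hx, rfl⟩ := hr; exact hupH x hx⟩
      · exact ⟨_, himinX, hquadcolH imin⟩
  refine ⟨by rw [hlam1]; exact himinpos, ⟨_, himinX, by rw [hlam1, heig imin]⟩,
    fun x hx => by rw [hlam1]; exact hlow x hx, by rw [hlam1]; exact hmu1, ?_, ?_⟩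
  · -- eigenvector transfer
    intro x hx hxe
    rw [hlam1] at hxe ⊢
    have h1 := (conj_diag_eigen_iff U hU hU' _ x _).mp (by rw [← hHdecomp]; exact hxe)
    rw [hMdecomp]
    apply (conj_diag_eigen_iff U hU hU' lam x (lam imin)).mpr
    intro i
    by_cases hyi : (Uᴴ *ᵥ x) i = 0
    · rw [hyi, mul_zero, mul_zero]
    · have h2 := mul_right_cancel₀ hyi (h1 i)
      have h4 : lam i = lam imin := by
        have := Real.exp_eq_exp.mp h2
        have hτ' : τ ≠ 0 := ne_of_gt hτ
        exact mul_left_cancel₀ hτ' (neg_inj.mp this)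
      rw [h4]
  · -- quadform transfer
    intro x hx hq
    rw [hlam1] at hq ⊢
    have hq2 : quadForm M x = ∑ i, lam i * (Uᴴ *ᵥ x) i ^ 2 := by
      conv_lhs => rw [hMdecomp]
      exact conj_diag_quadForm U hU hU' lam x
    have hsum0 : ∑ i, (lam i * (Uᴴ *ᵥ x) i ^ 2 - lam imin * (Uᴴ *ᵥ x) i ^ 2) = 0 := by
      rw [Finset.sum_sub_distrib, ← hq2, hq, ← Finset.mul_sum, hnorm x hx, mul_one, sub_self]
    have hnn : ∀ i ∈ Finset.univ, 0 ≤ lam i * (Uᴴ *ᵥ x) i ^ 2 - lam imin * (Uᴴ *ᵥ x) i ^ 2 := by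
      intro i _
      by_cases hi : i = i₀
      · subst hi
        rw [hy0 x hx]
        simp
      · have := himinle i hi
        nlinarith [sq_nonneg ((Uᴴ *ᵥ x) i)]
    have hzero := (Finset.sum_eq_zero_iff_of_nonneg hnn).mp hsum0
    rw [hMdecomp]
    apply (conj_diag_eigen_iff U hU hU' lam x (lam imin)).mpr
    intro i
    by_cases hyi : (Uᴴ *ᵥ x) i = 0
    · rw [hyi, mul_zero, mul_zero]
    · have h1 := hzero i (Finset.mem_univ i)
      have h2 : lam i = lam imin := by
        have h3 : (lam i - lam imin) * (Uᴴ *ᵥ x) i ^ 2 = 0 := by ring_nf; ring_nf at h1; linarith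
        rcases mul_eq_zero.mp h3 with h | h
        · linarith
        · exact absurd h (pow_ne_zero _ hyi)
      rw [h2]

section LtLemmas
variable {n m : ℕ}

lemma quadForm_nonneg {A : Matrix (Fin n) (Fin n) ℝ} (hA : A.PosSemidef) (x : Fin n → ℝ) :
    0 ≤ quadForm A x := by
  have := hA.dotProduct_mulVec_nonneg x
  simpa [dotProduct, quadForm] using this

lemma sum_mulVec' {ι : Type*} (s : Finset ι) (f : ι → Matrix (Fin n) (Fin n) ℝ)
    (x : Fin n → ℝ) : (∑ k ∈ s, f k) *ᵥ x = ∑ k ∈ s, f k *ᵥ x := by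
  classical
  induction s using Finset.induction with
  | empty => simp [Matrix.zero_mulVec]
  | insert _ _ hk ih => rw [Finset.sum_insert hk, Finset.sum_insert hk, Matrix.add_mulVec, ih]

lemma dotProduct_sum' {ι : Type*} (s : Finset ι) (x : Fin n → ℝ) (f : ι → (Fin n → ℝ)) :
    x ⬝ᵥ ∑ k ∈ s, f k = ∑ k ∈ s, x ⬝ᵥ f k := by
  simp only [dotProduct, Finset.sum_apply, Finset.mul_sum]
  exact Finset.sum_comm

lemma quadForm_Lt (L : Fin m → Matrix (Fin n) (Fin n) ℝ) (t : Fin m → ℝ) (x : Fin n → ℝ) :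
    quadForm (Lt L t) x = ∑ k, t k * (quadForm (L k) x / lam1 (L k)) := by
  rw [quadForm, Lt, sum_mulVec', dotProduct_sum']
  apply Finset.sum_congr rfl
  intro k _
  rw [Matrix.smul_mulVec, dotProduct_smul, smul_eq_mul, quadForm]
  ring

lemma Lt_posSemidef (L : Fin m → Matrix (Fin n) (Fin n) ℝ) (hpsd : ∀ k, (L k).PosSemidef)
    (hpos : ∀ k, 0 < lam1 (L k)) (t : Fin m → ℝ) (ht : ∀ k, 0 ≤ t k) :
    (Lt L t).PosSemidef := by
  refine .of_dotProduct_mulVec_nonneg ?_ ?_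
  · show (Lt L t)ᴴ = Lt L t
    rw [Lt, Matrix.conjTranspose_sum]
    apply Finset.sum_congr rfl
    intro k _
    rw [Matrix.conjTranspose_smul, (hpsd k).1]
    simp
  · intro x
    have h1 : star x ⬝ᵥ Lt L t *ᵥ x = quadForm (Lt L t) x := by
      simp [quadForm]
    rw [h1, quadForm_Lt]
    apply Finset.sum_nonneg
    intro k _
    exact mul_nonneg (ht k) (div_nonneg (quadForm_nonneg (hpsd k) x) (hpos k).le)

lemma Lt_kernelOnes (L : Fin m → Matrix (Fin n) (Fin n) ℝ) (hpsd : ∀ k, (L k).PosSemidef)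
    (hker : ∀ k, kernelOnes (L k)) (hpos : ∀ k, 0 < lam1 (L k))
    (t : Fin m → ℝ) (ht : t ∈ simplex m) : kernelOnes (Lt L t) := by
  intro x
  constructor
  · intro hx
    -- quadratic form vanishes
    have hq : quadForm (Lt L t) x = 0 := by rw [quadForm, hx, dotProduct_zero]
    rw [quadForm_Lt] at hq
    -- some positive weight
    obtain ⟨k₀, hk₀⟩ : ∃ k, 0 < t k := by
      by_contra hcon
      push_neg at hcon
      have : ∑ k, t k = 0 := le_antisymm (Finset.sum_nonpos fun k _ => hcon k)
        (Finset.sum_nonneg fun k _ => ht.1 k)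
      rw [ht.2] at this
      norm_num at this
    have hterm : ∀ k ∈ Finset.univ, (0:ℝ) ≤ t k * (quadForm (L k) x / lam1 (L k)) :=
      fun k _ => mul_nonneg (ht.1 k) (div_nonneg (quadForm_nonneg (hpsd k) x) (hpos k).le)
    have hzero := (Finset.sum_eq_zero_iff_of_nonneg hterm).mp hq k₀ (Finset.mem_univ _)
    have hq0 : quadForm (L k₀) x = 0 := by
      rcases mul_eq_zero.mp hzero with h | h
      · exact absurd h (ne_of_gt hk₀)
      · rcases div_eq_zero_iff.mp h with h' | h'
        · exact h'
        · exact absurd h' (ne_of_gt (hpos k₀))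
    have hLx : L k₀ *ᵥ x = 0 := by
      apply ((hpsd k₀).dotProduct_mulVec_zero_iff x).mp
      simpa [quadForm] using hq0
    exact (hker k₀ x).mp hLx
  · rintro ⟨c, rfl⟩
    rw [Lt, sum_mulVec']
    apply Finset.sum_eq_zero
    intro k _
    rw [Matrix.smul_mulVec, (hker k _).mpr ⟨c, rfl⟩, smul_zero]

end LtLemmas

section Topo
variable {n : ℕ}

lemma continuous_quadForm (A : Matrix (Fin n) (Fin n) ℝ) : Continuous (quadForm A) := by
  have : quadForm A = fun x => ∑ i, x i * ∑ j, A i j * x j := by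
    funext x
    unfold quadForm dotProduct Matrix.mulVec dotProduct
    rfl
  rw [this]
  fun_prop

lemma quadForm_neg (A : Matrix (Fin n) (Fin n) ℝ) (x : Fin n → ℝ) :
    quadForm A (-x) = quadForm A x := by
  unfold quadForm
  rw [Matrix.mulVec_neg, dotProduct_neg, neg_dotProduct, neg_neg]

lemma isCompact_meanZeroUnit : IsCompact (meanZeroUnit n) := by
  have hclosed : IsClosed (meanZeroUnit n) := by
    have h1 : IsClosed {x : Fin n → ℝ | onesVec n ⬝ᵥ x = 0} := by
      apply isClosed_eq _ continuous_const
      unfold dotProduct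
      fun_prop
    have h2 : IsClosed {x : Fin n → ℝ | x ⬝ᵥ x = 1} := by
      apply isClosed_eq _ continuous_const
      unfold dotProduct
      fun_prop
    exact h1.inter h2
  have hbdd : Bornology.IsBounded (meanZeroUnit n) := by
    apply Bornology.IsBounded.subset (Metric.isBounded_closedBall (x := (0 : Fin n → ℝ)) (r := 1))
    intro x hx
    simp only [Metric.mem_closedBall, dist_zero_right]
    apply pi_norm_le_iff_of_nonneg zero_le_one |>.mpr
    intro i
    have h1 : x i ^ 2 ≤ 1 := by
      have h2 : ∑ j, x j * x j = 1 := hx.2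
      have h3 : ∀ j ∈ Finset.univ, 0 ≤ x j * x j := fun j _ => mul_self_nonneg _
      have := Finset.single_le_sum h3 (Finset.mem_univ i)
      rw [h2] at this
      nlinarith
    rw [Real.norm_eq_abs]
    nlinarith [abs_nonneg (x i), sq_abs (x i)]
  exact Metric.isCompact_of_isClosed_isBounded hclosed hbdd

end Topo

set_option maxHeartbeats 1000000 in
/-- diffusion interpretation (Corollary 1). -/
theorem diffusion_minimax {n m : ℕ} [Nonempty (Fin m)]
    (L : Fin m → Matrix (Fin n) (Fin n) ℝ)
    (hsymm : ∀ k, (L k).IsSymm) (hpsd : ∀ k, (L k).PosSemidef)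
    (hker : ∀ k, kernelOnes (L k)) (hpos : ∀ k, 0 < lam1 (L k))
    (hsimple : ∀ t ∈ simplex m, simpleLam1 (Lt L t))
    (τ : ℝ) (hτ : 0 < τ)
    (tstar : Fin m → ℝ) (htstar : tstar ∈ simplex m)
    (hmin : ∀ t ∈ simplex m,
      mu1 (NormedSpace.exp (-(τ • Lt L tstar))) ≤
        mu1 (NormedSpace.exp (-(τ • Lt L t))))
    (φ : Fin n → ℝ) (hφX : φ ∈ meanZeroUnit n)
    (hφeig : NormedSpace.exp (-(τ • Lt L tstar)) *ᵥ φ =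
      mu1 (NormedSpace.exp (-(τ • Lt L tstar))) • φ) :
    (∀ t ∈ simplex m, lam1 (Lt L t) ≤ lam1 (Lt L tstar)) ∧
      (∀ x ∈ meanZeroUnit n, maxScore L φ ≤ maxScore L x) := by
  have hn : 2 ≤ n := meanZero_two_le hφX
  have pack : ∀ t ∈ simplex m,
      0 < lam1 (Lt L t) ∧
      (∃ v ∈ meanZeroUnit n, Lt L t *ᵥ v = lam1 (Lt L t) • v) ∧
      (∀ x ∈ meanZeroUnit n, lam1 (Lt L t) ≤ quadForm (Lt L t) x) ∧
      mu1 (NormedSpace.exp (-(τ • Lt L t))) = Real.exp (-(τ * lam1 (Lt L t))) ∧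
      (∀ x ∈ meanZeroUnit n,
        NormedSpace.exp (-(τ • Lt L t)) *ᵥ x = Real.exp (-(τ * lam1 (Lt L t))) • x →
          Lt L t *ᵥ x = lam1 (Lt L t) • x) ∧
      (∀ x ∈ meanZeroUnit n, quadForm (Lt L t) x = lam1 (Lt L t) →
          Lt L t *ᵥ x = lam1 (Lt L t) • x) :=
    fun t ht => spectral_package hn (Lt_posSemidef L hpsd hpos t ht.1)
      (Lt_kernelOnes L hpsd hker hpos t ht) τ hτ
  obtain ⟨hposs, hexists, hlows, hmus, htranss, hqtranss⟩ := pack tstar htstar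
  have part1 : ∀ t ∈ simplex m, lam1 (Lt L t) ≤ lam1 (Lt L tstar) := by
    intro t ht
    obtain ⟨_, _, _, hmut, _, _⟩ := pack t ht
    have h1 := hmin t ht
    rw [hmut, hmus] at h1
    have h2 := Real.exp_le_exp.mp h1
    nlinarith
  refine ⟨part1, ?_⟩
  set Ms := Lt L tstar with hMs
  set ls := lam1 Ms with hls
  have hφe : Ms *ᵥ φ = ls • φ := htranss φ hφX (by rw [← hmus]; exact hφeig)
  -- lower bound for all x
  have hmaxlb : ∀ x ∈ meanZeroUnit n, ls ≤ maxScore L x := by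
    intro x hx
    have h1 : ls ≤ quadForm Ms x := hlows x hx
    have h2 : quadForm Ms x ≤ maxScore L x := by
      rw [hMs, quadForm_Lt]
      calc ∑ k, tstar k * (quadForm (L k) x / lam1 (L k))
          ≤ ∑ k, tstar k * maxScore L x := Finset.sum_le_sum fun k _ =>
            mul_le_mul_of_nonneg_left
              (Finset.le_sup' (fun k => quadForm (L k) x / lam1 (L k)) (Finset.mem_univ k))
              (htstar.1 k)
      _ = maxScore L x := by rw [← Finset.sum_mul, htstar.2, one_mul]
    linarith
  -- key upper bound on φ's scores
  have hkey : ∀ k₀, quadForm (L k₀) φ / lam1 (L k₀) ≤ ls := by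
    intro k₀
    by_contra hcon
    push_neg at hcon
    set g : (Fin n → ℝ) → ℝ := fun x => quadForm (L k₀) x / lam1 (L k₀) with hg
    set δ : ℝ := (g φ - ls) / 2 with hδ
    have hδpos : 0 < δ := by
      rw [hδ]
      simp only [hg]
      linarith
    set θ : ℝ := ls + δ with hθ
    have hgφ : θ < g φ := by
      rw [hθ, hδ]
      linarith
    set K := meanZeroUnit n ∩ {x | g x ≤ θ} with hK
    have hgcont : Continuous g := (continuous_quadForm (L k₀)).div_const _
    have hKcomp : IsCompact K :=
      isCompact_meanZeroUnit.inter_right (isClosed_le hgcont continuous_const)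
    obtain ⟨η, hηpos, hη⟩ : ∃ η > 0, ∀ x ∈ K, ls + η ≤ quadForm Ms x := by
      by_cases hKe : K.Nonempty
      · obtain ⟨x₀, hx₀K, hx₀min⟩ := hKcomp.exists_isMinOn hKe
          (continuous_quadForm Ms).continuousOn
        have hx₀X : x₀ ∈ meanZeroUnit n := hx₀K.1
        have hgt : ls < quadForm Ms x₀ := by
          rcases (hlows x₀ hx₀X).lt_or_eq with h | h
          · exact h
          · exfalso
            have hev := hqtranss x₀ hx₀X h.symm
            rcases hsimple tstar htstar φ hφX x₀ hx₀X hφe hev with h' | h'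
            · rw [h'] at hx₀K
              exact absurd hx₀K.2 (not_le.mpr hgφ)
            · rw [h'] at hx₀K
              have h2 : g (-φ) ≤ θ := hx₀K.2
              rw [show g (-φ) = g φ from by simp only [hg]; rw [quadForm_neg]] at h2
              exact absurd h2 (not_le.mpr hgφ)
        refine ⟨quadForm Ms x₀ - ls, by linarith, fun x hx => ?_⟩
        have := (isMinOn_iff.mp hx₀min) x hx
        linarith
      · exact ⟨1, one_pos, fun x hx => absurd ⟨x, hx⟩ hKe⟩
    have hlspos : 0 < ls := hposs
    set ε : ℝ := η / (2 * (ls + η)) with hε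
    have hεpos : 0 < ε := by
      apply div_pos hηpos
      nlinarith
    have hεlt : ε < 1 := by
      rw [hε, div_lt_one (by nlinarith)]
      nlinarith
    have hεmul : ε * (ls + η) = η / 2 := by
      rw [hε]
      field_simp
    set t' : Fin m → ℝ := fun k => (1 - ε) * tstar k + ε * (if k = k₀ then 1 else 0) with ht'def
    have ht' : t' ∈ simplex m := by
      constructor
      · intro k
        have h1 := htstar.1 k
        have h2 : (0:ℝ) ≤ 1 - ε := by linarith
        simp only [ht'def]
        by_cases h : k = k₀
        · rw [if_pos h]
          nlinarith [mul_nonneg h2 h1]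
        · rw [if_neg h]
          nlinarith [mul_nonneg h2 h1]
      · rw [ht'def]
        rw [Finset.sum_add_distrib, ← Finset.mul_sum, ← Finset.mul_sum, htstar.2,
          Finset.sum_ite_eq' Finset.univ k₀ (fun _ => (1:ℝ))]
        simp
    have hquadt' : ∀ x, quadForm (Lt L t') x = (1 - ε) * quadForm Ms x + ε * g x := by
      intro x
      rw [quadForm_Lt, hMs, quadForm_Lt, Finset.mul_sum]
      simp only [hg]
      have hsplit : ∀ k : Fin m, t' k * (quadForm (L k) x / lam1 (L k)) =
          (1 - ε) * (tstar k * (quadForm (L k) x / lam1 (L k))) +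
          (if k = k₀ then ε * (quadForm (L k₀) x / lam1 (L k₀)) else 0) := by
        intro k
        simp only [ht'def]
        by_cases h : k = k₀
        · rw [if_pos h, if_pos h, h]
          ring
        · rw [if_neg h, if_neg h]
          ring
      simp_rw [hsplit]
      rw [Finset.sum_add_distrib, Finset.sum_ite_eq' Finset.univ k₀]
      simp
    have hgnn : ∀ x : Fin n → ℝ, 0 ≤ g x := fun x => by
      simp only [hg]
      exact div_nonneg (quadForm_nonneg (hpsd k₀) x) (hpos k₀).le
    set c := min (ε * δ) (η / 2) with hc
    have hcpos : 0 < c := lt_min (by positivity) (by positivity)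
    have hbig : ∀ x ∈ meanZeroUnit n, ls + c ≤ quadForm (Lt L t') x := by
      intro x hx
      rw [hquadt' x]
      by_cases hcase : θ ≤ g x
      · have h1 : ls ≤ quadForm Ms x := hlows x hx
        have h2 : c ≤ ε * δ := min_le_left _ _
        have hθx : ls + δ ≤ g x := by rw [hθ] at hcase; exact hcase
        have k1 : (1 - ε) * ls ≤ (1 - ε) * quadForm Ms x := by nlinarith
        have k2 : ε * (ls + δ) ≤ ε * g x := by nlinarith
        nlinarith
      · push_neg at hcase
        have hxK : x ∈ K := ⟨hx, le_of_lt hcase⟩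
        have h1 := hη x hxK
        have h2 : c ≤ η / 2 := min_le_right _ _
        have h3 := hgnn x
        have k1 : (1 - ε) * (ls + η) ≤ (1 - ε) * quadForm Ms x := by nlinarith
        have k2 : 0 ≤ ε * g x := by nlinarith
        nlinarith [hεmul]
    have hle : ls + c ≤ lam1 (Lt L t') := by
      apply le_csInf
      · exact ⟨_, ⟨φ, hφX, rfl⟩⟩
      · rintro r ⟨x, hx, rfl⟩
        exact hbig x hx
    have hfinal := part1 t' ht'
    linarith
  intro x hx
  have hup : maxScore L φ ≤ ls := Finset.sup'_le _ _ fun k _ => hkey k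
  linarith [hmaxlb x hx]
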